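/- arXiv:1304.0143 — 5 statements merged into one kernel-verified Lean document; each statement's English description precedes it below -/
import Mathlib

section
/- There does not exist a ring whose unit group is cyclic of order 5. -/
/-- There does not exist a ring whose unit group is cyclic of order 5. -/
theorem no_ring_units_cyclic_order_five :
    ¬ ∃ (R : Type) (_ : Ring R), IsCyclic Rˣ ∧ Nat.card Rˣ = 5 := by
  rintro ⟨R, _, hcyc, hcard⟩
  have hfin : Finite Rˣ := Nat.finite_of_card_ne_zero (by omega)
  -- the unit group has odd order, so -1 = 1, i.e. char 2
  have hm5 : orderOf (-1 : Rˣ) ∣ 5 := hcard ▸ orderOf_dvd_natCard _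
  have hm2 : orderOf (-1 : Rˣ) ∣ 2 := orderOf_dvd_of_pow_eq_one (by simp)
  have hneg : (-1 : Rˣ) = 1 := orderOf_eq_one_iff.mp
    (Nat.dvd_one.mp (Nat.dvd_gcd hm2 hm5))
  have hnegR : (-1 : R) = 1 := by
    have := congrArg (Units.val) hneg
    simpa using this
  have h2 : (2 : R) = 0 := by
    calc (2 : R) = 1 + 1 := by norm_num
    _ = -1 + 1 := by rw [hnegR]
    _ = 0 := neg_add_cancel 1
  -- a generator of order 5
  obtain ⟨g, hg⟩ := hcyc.exists_ofOrder_eq_natCard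
  rw [hcard] at hg
  set u : R := (g : R) with hu
  have hx5 : u ^ 5 = 1 := by
    have : g ^ 5 = 1 := by rw [← hg]; exact pow_orderOf_eq_one g
    have := congrArg (Units.val) this
    simpa using this
  have hu1 : u ≠ 1 := by
    intro h
    have : g = 1 := Units.ext (show (g : R) = ((1 : Rˣ) : R) by rw [Units.val_one]; exact h)
    rw [this, orderOf_one] at hg
    omega
  -- work in the commutative subring generated by u
  set S := Subring.closure ({u} : Set R) with hS
  letI : CommRing S := Subring.closureCommRingOfComm
    (by rintro a ha b hb; simp only [Set.mem_singleton_iff] at ha hb; rw [ha, hb])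
  set x : S := ⟨u, Subring.subset_closure rfl⟩ with hxdef
  have hx5S : x ^ 5 = 1 := by
    apply Subtype.ext
    push_cast
    exact hx5
  have h2S : (2 : S) = 0 := by
    apply Subtype.ext
    push_cast
    exact h2
  -- the element t of multiplicative order 3
  set s : S := 1 + x + x ^ 2 + x ^ 3 + x ^ 4 with hsdef
  set t : S := s + (1 - s) * (x + x ^ 4) with htdef
  have key : ∀ y : S, t * y = 1 → y = 1 → False := by
    intro y hty hy1
    rw [hy1, mul_one] at hty
    -- from t = 1 we deduce x = 1
    have hxone : x = 1 := by
      linear_combination (x ^ 3) * hty +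
        (x ^ 6 + x ^ 5 + x ^ 4 + x + 1) * hx5S + (x ^ 8 + x) * h2S
    exact hu1 (by simpa [hxdef] using congrArg (Subtype.val) hxone)
  have ht3 : t * (t * t) = 1 := by
    linear_combination
      (-(x ^ 19) - 3 * x ^ 18 - 6 * x ^ 17 - 13 * x ^ 16 - 18 * x ^ 15 - 22 * x ^ 14
        - 28 * x ^ 13 - 21 * x ^ 12 - 16 * x ^ 11 - 11 * x ^ 10 + 5 * x ^ 9 + 5 * x ^ 8
        + 6 * x ^ 7 + 8 * x ^ 6 - 2 * x ^ 5 - 4 * x ^ 4 - 7 * x ^ 3 - 9 * x ^ 2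
        - 7 * x - 8) * hx5S +
      (-2 * x - 3 * x ^ 2 - 3 * x ^ 3 - 2 * x ^ 4 - 4) * h2S
  -- t is a unit of S, hence of R
  set tu : Sˣ := ⟨t, t * t, ht3, by linear_combination ht3⟩ with htu
  set T : Rˣ := Units.map (S.subtype.toMonoidHom) tu with hT
  have hT3 : T ^ 3 = 1 := by
    have htu3 : tu ^ 3 = 1 := by
      apply Units.ext
      show t ^ 3 = 1
      linear_combination ht3
    rw [hT, ← map_pow, htu3, map_one]
  have hTne : T ≠ 1 := by
    intro h
    have h1 : ((T : R)) = 1 := by rw [h]; rfl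
    have h2' : (t : R) = 1 := h1
    have ht1 : t = (1 : S) := Subtype.ext (by simpa using h2')
    exact key 1 (by rw [mul_one, ht1]) rfl
  have hd3 : orderOf T ∣ 3 := orderOf_dvd_of_pow_eq_one hT3
  have hd5 : orderOf T ∣ 5 := hcard ▸ orderOf_dvd_natCard T
  have : orderOf T = 1 := Nat.dvd_one.mp (Nat.dvd_gcd hd3 hd5)
  exact hTne (orderOf_eq_one_iff.mp this)
end

section
/- Let G be a finite group with trivial center. If there exists a ring with unit group isomorphic to G, then there exists a two-sided ideal I of the group algebra F₂[G] such that the unit group of F₂[G]/I is isomorphic to G and the composition G → F₂[G]^× → (F₂[G]/I)^× ≅ G is the identity map. -/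
/-!
Since `G` has trivial center and `-1` is central in `Rˣ`, we get `-1 = 1` in `R`, so `R` is an
`𝔽₂`-algebra and `Rˣ ≃* G` induces a ring map `φ : 𝔽₂[G] → R`. Every unit of `R` is the image of a
group element, hence of a unit of `𝔽₂[G]`; so `𝔽₂[G] / ker φ`, which embeds into `R`, has exactly
the units of `R`, i.e. `G`.
-/

theorem Units.neg_one_mem_center (R : Type*) [Ring R] : (-1 : Rˣ) ∈ Subgroup.center Rˣ :=
  Subgroup.mem_center_iff.2 fun u => by simp

theorem two_eq_zero_of_units_mulEquiv {R G : Type*} [Ring R] [Group G]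
    (hG : Subgroup.center G = ⊥) (e : Rˣ ≃* G) : ((2 : ℕ) : R) = 0 := by
  have h : e (-1) ∈ Subgroup.center G :=
    MulEquivClass.apply_mem_center e (Units.neg_one_mem_center R)
  rw [hG, Subgroup.mem_bot, map_eq_one_iff e e.injective] at h
  have h' : (-1 : R) = 1 := by simpa using congrArg Units.val h
  rw [Nat.cast_two, ← one_add_one_eq_two]
  nth_rw 1 [← h', neg_add_cancel]

namespace TwoSidedIdeal

variable {A R : Type*} [Ring A] [Ring R]

def kerLift (φ : A →+* R) : (ker φ).ringCon.Quotient →+* R :=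
  (ker φ).ringCon.lift φ fun _ _ => id

theorem kerLift_injective (φ : A →+* R) : Function.Injective (kerLift φ) := by
  rintro ⟨a⟩ ⟨b⟩ h
  exact Quot.sound h

noncomputable def unitsQuotientKerEquiv (φ : A →+* R)
    (hφ : Function.Surjective (Units.map (φ : A →* R))) :
    ((ker φ).ringCon.Quotient)ˣ ≃* Rˣ :=
  MulEquiv.ofBijective (Units.map (kerLift φ : _ →* R))
    ⟨Units.map_injective (kerLift_injective φ), fun u => by
      obtain ⟨a, rfl⟩ := hφ u
      exact ⟨Units.map ((ker φ).ringCon.mk' : A →* _) a, Units.ext rfl⟩⟩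

end TwoSidedIdeal

theorem exists_ideal_of_units_iso_general
    (G : Type) [Group G] (hG : Subgroup.center G = ⊥)
    (hR : ∃ (R : Type) (_ : Ring R), Nonempty (Rˣ ≃* G)) :
    ∃ (I : TwoSidedIdeal (MonoidAlgebra (ZMod 2) G))
      (e : (I.ringCon.Quotient)ˣ ≃* G),
      ∀ g : G,
        e (((RingCon.mk' I.ringCon).toMonoidHom.comp
            (MonoidAlgebra.of (ZMod 2) G)).toHomUnits g) = g := by
  obtain ⟨R, _, ⟨e⟩⟩ := hR
  -- `ringChar R ∣ 2` rather than `CharP R 2`, so that the zero ring is covered too.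
  let : Algebra (ZMod 2) R :=
    ZMod.algebra' R (ringChar R) (ringChar.dvd (two_eq_zero_of_units_mulEquiv hG e))
  let φ : MonoidAlgebra (ZMod 2) G →+* R :=
    MonoidAlgebra.lift (ZMod 2) R G ((Units.coeHom R).comp e.symm.toMonoidHom)
  have hφ (g : G) :
      Units.map (φ : MonoidAlgebra (ZMod 2) G →* R)
        ((MonoidAlgebra.of (ZMod 2) G).toHomUnits g) = e.symm g :=
    Units.ext (by simp [φ])
  have hφ_surj : Function.Surjective (Units.map (φ : MonoidAlgebra (ZMod 2) G →* R)) := fun u =>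
    ⟨_, (hφ (e u)).trans (e.symm_apply_apply u)⟩
  refine ⟨TwoSidedIdeal.ker φ, (TwoSidedIdeal.unitsQuotientKerEquiv φ hφ_surj).trans e,
    fun g => ?_⟩
  rw [MulEquiv.trans_apply, ← e.eq_symm_apply, ← hφ g]
  rfl

/-- If `G` is a finite group with trivial center and some ring has unit group isomorphic
to `G`, then there is a two-sided ideal `I` of `𝔽₂[G]` such that the unit group of
`𝔽₂[G]/I` is isomorphic to `G`, the isomorphism composed with the natural map
`G → 𝔽₂[G]ˣ → (𝔽₂[G]/I)ˣ` being the identity of `G`. -/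
theorem exists_ideal_of_units_iso
    (G : Type) [Group G] [Finite G] (hG : Subgroup.center G = ⊥)
    (hR : ∃ (R : Type) (_ : Ring R), Nonempty (Rˣ ≃* G)) :
    ∃ (I : TwoSidedIdeal (MonoidAlgebra (ZMod 2) G))
      (e : (I.ringCon.Quotient)ˣ ≃* G),
      ∀ g : G,
        e (((RingCon.mk' I.ringCon).toMonoidHom.comp
            (MonoidAlgebra.of (ZMod 2) G)).toHomUnits g) = g :=
  exists_ideal_of_units_iso_general G hG hR
end

section
/- Let G be a finite group and I a two-sided ideal of F₂[G] containing no element of weight 2. Suppose T ⊆ G is a subset, viewed as the element Σ_{t∈T} t of F₂[G], and σ ∈ G satisfies T + σ ∈ I. Then σ commutes with every element of the normalizer N_G(T) = {g ∈ G : gTg⁻¹ = T}. -/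
/-- If `I` is a two-sided ideal of `𝔽₂[G]` containing no weight-2 element, `T ⊆ G` a
subset (viewed as `∑_{t ∈ T} t ∈ 𝔽₂[G]`) and `σ ∈ G` satisfies `T + σ ∈ I`, then `σ`
commutes with every element of the normalizer `N_G(T) = {g | g T g⁻¹ = T}`. -/
theorem sigma_commutes_with_normalizer
    (G : Type) [Group G] [Finite G] [DecidableEq G]
    (I : TwoSidedIdeal (MonoidAlgebra (ZMod 2) G))
    (hI : ∀ g h : G, g ≠ h →
      MonoidAlgebra.of (ZMod 2) G g + MonoidAlgebra.of (ZMod 2) G h ∉ I)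
    (T : Finset G) (σ : G)
    (hTσ : (∑ t ∈ T, MonoidAlgebra.of (ZMod 2) G t) + MonoidAlgebra.of (ZMod 2) G σ ∈ I) :
    ∀ g : G, T.image (fun t => g * t * g⁻¹) = T → Commute g σ := by
  intro g hg
  set of' := MonoidAlgebra.of (ZMod 2) G with hof
  set S : MonoidAlgebra (ZMod 2) G := ∑ t ∈ T, of' t with hS
  have hconj : of' g * (S + of' σ) * of' g⁻¹ ∈ I :=
    I.mul_mem_right _ _ (I.mul_mem_left _ _ hTσ)
  have hinj : Function.Injective (fun t : G => g * t * g⁻¹) := by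
    intro a b hab
    simpa using hab
  have hsum : of' g * S * of' g⁻¹ = S := by
    rw [hS, Finset.mul_sum, Finset.sum_mul]
    calc (∑ t ∈ T, of' g * of' t * of' g⁻¹)
        = ∑ t ∈ T, of' (g * t * g⁻¹) := by
          refine Finset.sum_congr rfl fun t _ => ?_
          simp [hof, MonoidAlgebra.of_apply, MonoidAlgebra.single_mul_single]
      _ = ∑ s ∈ T.image (fun t => g * t * g⁻¹), of' s :=
          (Finset.sum_image (fun a _ b _ h => hinj h)).symm
      _ = S := by rw [hg, hS]
  have hconj' : S + of' (g * σ * g⁻¹) ∈ I := by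
    have : of' g * (S + of' σ) * of' g⁻¹ = S + of' (g * σ * g⁻¹) := by
      rw [mul_add, add_mul, hsum]
      congr 1
      simp [hof, MonoidAlgebra.of_apply, MonoidAlgebra.single_mul_single]
    rwa [this] at hconj
  have hdiff : of' σ + of' (g * σ * g⁻¹) ∈ I := by
    have := I.add_mem hTσ hconj'
    have heq : S + of' σ + (S + of' (g * σ * g⁻¹)) = of' σ + of' (g * σ * g⁻¹) := by
      have h2 : S + S = 0 := by
        rw [← two_smul (ZMod 2) S, show (2 : ZMod 2) = 0 from rfl, zero_smul]
      calc S + of' σ + (S + of' (g * σ * g⁻¹))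
          = (S + S) + (of' σ + of' (g * σ * g⁻¹)) := by abel
        _ = of' σ + of' (g * σ * g⁻¹) := by rw [h2, zero_add]
    rwa [heq] at this
  have heq : g * σ * g⁻¹ = σ := by
    by_contra hne
    exact hI σ (g * σ * g⁻¹) (Ne.symm hne) hdiff
  have : g * σ = σ * g := by
    have := congrArg (· * g) heq
    simpa [mul_assoc] using this
  exact this
end

section
/- Let H₁ = Σ_{σ ∈ S₃} σ ∈ F₂[S₃]. The quotient ring F₂[S₃]/(H₁) by the two-sided ideal generated by H₁ has exactly 32 elements and its unit group is isomorphic to S₃. -/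
/-!
Every `g ∈ G` satisfies `g H = H g = H`, so `x H = H x = ε(x) H` with `ε` the augmentation, and the
two-sided ideal `(H)` is the line `k H`; hence `|F₂[S₃]/(H)| = 2⁶ / 2 = 32`.
The permutation representation `F₂[S₃] → M₃(F₂)` kills `H` (each entry of `∑ σ P_σ` is `2! = 0`)
and has kernel exactly `(H)`, so the quotient embeds in `M₃(F₂)`. An invertible matrix in the image
is a permutation matrix, so every unit of the quotient is the class of a permutation; distinct
permutations stay distinct modulo `H` because `H` has full support.
-/

open Equiv Matrix

namespace TwoSidedIdeal

variable {R : Type*} [Ring R]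

theorem card_quotient_mul_card (I : TwoSidedIdeal R) :
    Nat.card I.ringCon.Quotient * Nat.card I = Nat.card R := by
  have hquot : I.ringCon.Quotient ≃ R ⧸ I.asIdeal.toAddSubgroup :=
    Quotient.congr (Equiv.refl R) fun x y => by
      change I.ringCon x y ↔ _
      rw [rel_iff, ← neg_mem_iff, neg_sub, sub_eq_neg_add]
      exact (QuotientAddGroup.leftRel_apply.trans mem_asIdeal).symm
  have hsub : I.asIdeal.toAddSubgroup ≃ I := Equiv.subtypeEquivRight fun _ => mem_asIdeal
  rw [Nat.card_congr hquot, ← Nat.card_congr hsub,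
    ← AddSubgroup.card_eq_card_quotient_mul_card_addSubgroup]

end TwoSidedIdeal

namespace MonoidAlgebra

theorem natCard_eq_pow {k G : Type*} [Semiring k] [Finite G] :
    Nat.card k[G] = Nat.card k ^ Nat.card G := by
  rw [Nat.card_congr (coeffEquiv.trans Finsupp.equivFunOnFinite), Nat.card_fun]

section SumOf

variable {k G : Type*} [CommRing k] [Group G] [Fintype G]

theorem coeff_sum_of (g : G) : (∑ h, of k G h).coeff g = 1 := by
  classical
  simp [coeff_sum, Finsupp.finsetSum_apply, of_apply, Finsupp.single_apply]

theorem mul_sum_of (x : k[G]) : x * ∑ g, of k G g = (∑ g, x.coeff g) • ∑ g, of k G g := by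
  ext g
  simp [coeff_mul_apply_left, Finsupp.sum_fintype]

theorem sum_of_mul (x : k[G]) : (∑ g, of k G g) * x = (∑ g, x.coeff g) • ∑ g, of k G g := by
  ext g
  simp [coeff_mul_apply_right, Finsupp.sum_fintype]

theorem mem_span_sum_of_iff {x : k[G]} :
    x ∈ TwoSidedIdeal.span {∑ g, of k G g} ↔ ∃ c : k, c • ∑ g, of k G g = x := by
  constructor
  · intro hx
    induction hx using TwoSidedIdeal.span_induction with
    | mem x hx => exact ⟨1, by rw [one_smul, Set.mem_singleton_iff.mp hx]⟩
    | zero => exact ⟨0, zero_smul _ _⟩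
    | add x y _ _ hx hy =>
      obtain ⟨c, rfl⟩ := hx
      obtain ⟨d, rfl⟩ := hy
      exact ⟨c + d, add_smul _ _ _⟩
    | neg x _ hx =>
      obtain ⟨c, rfl⟩ := hx
      exact ⟨-c, neg_smul _ _⟩
    | left_absorb a x _ hx =>
      obtain ⟨c, rfl⟩ := hx
      exact ⟨c * ∑ g, a.coeff g, by rw [mul_smul_comm, mul_sum_of, smul_smul]⟩
    | right_absorb b x _ hx =>
      obtain ⟨c, rfl⟩ := hx
      exact ⟨c * ∑ g, b.coeff g, by rw [smul_mul_assoc, sum_of_mul, smul_smul]⟩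
  · rintro ⟨c, rfl⟩
    have := TwoSidedIdeal.mul_mem_left _ (c • 1 : k[G]) _
      (TwoSidedIdeal.subset_span (Set.mem_singleton (∑ g, of k G g)))
    rwa [smul_mul_assoc, one_mul] at this

theorem smul_sum_of_injective : Function.Injective fun c : k => c • ∑ g, of k G g := by
  intro c d h
  simpa [coeff_sum_of] using congr_arg (fun x : k[G] => x.coeff 1) h

theorem natCard_span_sum_of : Nat.card (TwoSidedIdeal.span {∑ g, of k G g}) = Nat.card k :=
  Nat.card_congr <| .symm <| .ofBijective (fun c => ⟨_, mem_span_sum_of_iff.2 ⟨c, rfl⟩⟩)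
    ⟨fun _ _ h => smul_sum_of_injective (congr_arg Subtype.val h),
      fun ⟨_, hx⟩ => (mem_span_sum_of_iff.1 hx).imp fun _ h => Subtype.ext h⟩

theorem natCard_quotient_span_sum_of_mul :
    Nat.card (TwoSidedIdeal.span {∑ g, of k G g}).ringCon.Quotient * Nat.card k =
      Nat.card k ^ Nat.card G := by
  rw [← natCard_eq_pow, ← TwoSidedIdeal.card_quotient_mul_card (TwoSidedIdeal.span {∑ g, of k G g}),
    natCard_span_sum_of]

noncomputable def quotientUnitsOf (I : TwoSidedIdeal k[G]) : G →* I.ringCon.Quotientˣ :=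
  ((RingCon.mk' I.ringCon).toMonoidHom.comp (of k G)).toHomUnits

theorem quotientUnitsOf_span_sum_of_injective [Nontrivial k] (hG : 3 ≤ Fintype.card G) :
    Function.Injective (quotientUnitsOf (TwoSidedIdeal.span {∑ g, of k G g})) := by
  intro σ τ h
  obtain ⟨c, hc⟩ := mem_span_sum_of_iff.1 <| (TwoSidedIdeal.rel_iff _ _ _).1 <|
    (RingCon.eq _).1 (congr_arg Units.val h)
  -- `of σ - of τ` vanishes off `{σ, τ}` while `c • H` is constant, so `c = 0`
  obtain ⟨ρ, hρσ, hρτ⟩ := ENat.exists_ne_ne_of_three_le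
    (by simpa [ENat.card_eq_coe_fintype_card] using hG) σ τ
  have hc0 : c = 0 := by
    simpa [coeff_sum_of, of_apply, Finsupp.single_apply, hρσ.symm, hρτ.symm] using
      congr_arg (fun x : k[G] => x.coeff ρ) hc
  rw [hc0, zero_smul, eq_comm, sub_eq_zero] at hc
  exact of_injective hc

end SumOf

section PermRep

variable (k n : Type*) [CommRing k] [Fintype n] [DecidableEq n]

noncomputable def permRep : k[Perm n] →ₐ[k] Matrix n n k :=
  lift k (Matrix n n k) (Perm n) permMatrixHom

variable {k n}

theorem permRep_apply (x : k[Perm n]) :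
    permRep k n x = ∑ σ, x.coeff σ • permMatrixHom σ := by
  rw [permRep, lift_apply]
  exact Finsupp.sum_fintype _ _ fun _ => zero_smul _ _

end PermRep

theorem permRep_eq_zero_iff {x : (ZMod 2)[Perm (Fin 3)]} :
    permRep (ZMod 2) (Fin 3) x = 0 ↔ x ∈ TwoSidedIdeal.span {∑ g, of _ _ g} := by
  have hker : ∀ a : Perm (Fin 3) → ZMod 2,
      ∑ σ, a σ • permMatrixHom (R := ZMod 2) σ = 0 → ∃ c, a = fun _ => c := by
    decide
  have hsum : ∑ σ : Perm (Fin 3), permMatrixHom (R := ZMod 2) σ = 0 := by decide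
  rw [mem_span_sum_of_iff]
  constructor
  · intro hx
    obtain ⟨c, hc⟩ := hker _ (by rwa [permRep_apply] at hx)
    refine ⟨c, ?_⟩
    ext g
    simp [congr_fun hc g]
  · rintro ⟨c, rfl⟩
    rw [map_smul, permRep, map_sum]
    simp only [lift_of, hsum, smul_zero]

theorem exists_permRep_eq_of_det_ne_zero {x : (ZMod 2)[Perm (Fin 3)]}
    (hx : (permRep (ZMod 2) (Fin 3) x).det ≠ 0) :
    ∃ σ, permRep (ZMod 2) (Fin 3) x = permRep (ZMod 2) (Fin 3) (of _ _ σ) := by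
  have hunits : ∀ a : Perm (Fin 3) → ZMod 2,
      (∑ σ, a σ • permMatrixHom (R := ZMod 2) σ).det ≠ 0 →
        ∃ σ, ∑ τ, a τ • permMatrixHom (R := ZMod 2) τ = permMatrixHom σ := by
    simp only [det_fin_three]
    decide
  rw [permRep_apply] at hx ⊢
  simpa [permRep] using hunits _ hx

theorem quotientUnitsOf_span_sum_of_surjective :
    Function.Surjective
      (quotientUnitsOf (TwoSidedIdeal.span {∑ g, of (ZMod 2) (Perm (Fin 3)) g})) := by
  set I := TwoSidedIdeal.span {∑ g, of (ZMod 2) (Perm (Fin 3)) g}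
  intro u
  obtain ⟨x, hx⟩ := I.ringCon.mk'_surjective u.val
  obtain ⟨y, hy⟩ := I.ringCon.mk'_surjective u⁻¹.val
  have hxy : x * y - 1 ∈ I := by
    have h : I.ringCon.mk' (x * y) = I.ringCon.mk' 1 := by
      rw [map_mul, map_one, hx, hy, Units.mul_inv]
    exact (TwoSidedIdeal.rel_iff _ _ _).1 ((RingCon.eq _).1 h)
  have hdet : (permRep (ZMod 2) (Fin 3) x).det ≠ 0 := by
    have h := permRep_eq_zero_iff.2 hxy
    rw [map_sub, map_mul, map_one, sub_eq_zero] at h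
    exact left_ne_zero_of_mul_eq_one (by rw [← det_mul, h, det_one])
  obtain ⟨σ, hσ⟩ := exists_permRep_eq_of_det_ne_zero hdet
  have hxσ : x - of _ _ σ ∈ I := permRep_eq_zero_iff.1 (by rw [map_sub, hσ, sub_self])
  refine ⟨σ, Units.ext ?_⟩
  rw [← hx]
  exact ((RingCon.eq _).2 ((TwoSidedIdeal.rel_iff _ _ _).2 hxσ)).symm

end MonoidAlgebra

/-- The quotient of `𝔽₂[S₃]` by the two-sided ideal generated by `H₁ = ∑_{σ ∈ S₃} σ`
has exactly 32 elements and unit group isomorphic to `S₃`. -/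
theorem quotient_by_H1 :
    Nat.card
      ((TwoSidedIdeal.span
        {∑ σ : Equiv.Perm (Fin 3),
          MonoidAlgebra.of (ZMod 2) (Equiv.Perm (Fin 3)) σ}).ringCon.Quotient) = 32 ∧
    Nonempty
      (((TwoSidedIdeal.span
        {∑ σ : Equiv.Perm (Fin 3),
          MonoidAlgebra.of (ZMod 2) (Equiv.Perm (Fin 3)) σ}).ringCon.Quotient)ˣ ≃*
        Equiv.Perm (Fin 3)) := by
  refine ⟨?_, ⟨(MulEquiv.ofBijective _ ⟨MonoidAlgebra.quotientUnitsOf_span_sum_of_injective ?_,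
    MonoidAlgebra.quotientUnitsOf_span_sum_of_surjective⟩).symm⟩⟩
  · have h := MonoidAlgebra.natCard_quotient_span_sum_of_mul (k := ZMod 2) (G := Perm (Fin 3))
    rw [Nat.card_zmod, Nat.card_perm, Nat.card_fin, show Nat.factorial 3 = 6 from rfl] at h
    omega
  · rw [Fintype.card_perm, Fintype.card_fin]
    decide
end

section
/- Let τ ∈ S₃ be a 3-cycle and H₂ = ι + τ + τ² ∈ F₂[S₃]. Then the quotient F₂[S₃]/(H₂) by the two-sided ideal generated by H₂ is isomorphic as a ring to the ring M₂(F₂) of 2×2 matrices over F₂. -/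
/-!
Identify `S₃` with `GL₂(𝔽₂)` through its action on the three nonzero vectors of `𝔽₂²`. The
induced algebra map `𝔽₂[S₃] → M₂(𝔽₂)` is onto, since every matrix unit is the image of a sum of
two permutations, and it kills `H₂`, since an element of order three in `GL₂(𝔽₂)` has minimal
polynomial `X² + X + 1`. Conversely, modulo `H₂` we have `gτ² ≡ -g - gτ`, so the quotient is
spanned by the images of `1, τ, σ, στ` for a transposition `σ`; it therefore has at most
`2⁴ = |M₂(𝔽₂)|` elements, and the induced surjection onto `M₂(𝔽₂)` is a bijection.
-/

open Equiv MonoidAlgebra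

namespace GroupAlgebraS3

section Quotient

variable (k : Type*) [CommRing k] {G : Type*} [Monoid G]

noncomputable def h2 (τ : G) : MonoidAlgebra k G := 1 + of k G τ + of k G (τ ^ 2)

abbrev QuotientH2 (τ : G) : Type _ := (TwoSidedIdeal.span {h2 k τ}).ringCon.Quotient

noncomputable abbrev mkH2 (τ : G) : MonoidAlgebra k G →ₐ[k] QuotientH2 k τ := RingCon.mkₐ k _

variable {k}

theorem mkH2_of_mul_sq (τ g : G) :
    mkH2 k τ (of k G (g * τ ^ 2)) = -(mkH2 k τ (of k G g) + mkH2 k τ (of k G (g * τ))) := by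
  have hmem : of k G g * h2 k τ ∈ TwoSidedIdeal.span {h2 k τ} :=
    TwoSidedIdeal.mul_mem_left _ _ _ (TwoSidedIdeal.subset_span rfl)
  have hzero : mkH2 k τ (of k G g * h2 k τ) = 0 := (RingCon.eq _).mpr hmem
  rw [eq_neg_iff_add_eq_zero, ← hzero]
  simp only [h2, mul_add, mul_one, ← map_mul, map_add]
  abel

end Quotient

theorem exists_eq_swap_pow_mul_pow : ∀ τ : Perm (Fin 3), τ ^ 3 = 1 → τ ≠ 1 →
    ∀ g : Perm (Fin 3), ∃ a : Fin 2, ∃ n : Fin 3, g = swap 0 1 ^ (a : ℕ) * τ ^ (n : ℕ) := by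
  decide

section Spanning

variable {k : Type*} [CommRing k] {τ : Perm (Fin 3)}

variable (k τ) in
noncomputable def spanningFamily (ab : Fin 2 × Fin 2) : QuotientH2 k τ :=
  mkH2 k τ (of k _ (swap 0 1 ^ (ab.1 : ℕ) * τ ^ (ab.2 : ℕ)))

theorem span_spanningFamily (hτ3 : τ ^ 3 = 1) (hτ : τ ≠ 1) :
    Submodule.span k (Set.range (spanningFamily k τ)) = ⊤ := by
  refine Submodule.eq_top_iff'.mpr fun x => ?_
  obtain ⟨x, rfl⟩ := RingCon.mkₐ_surjective (α := k) _ x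
  induction x using MonoidAlgebra.induction_on with
  | of g =>
    obtain ⟨a, n, rfl⟩ := exists_eq_swap_pow_mul_pow τ hτ3 hτ g
    have hmem (b : Fin 2) :
        spanningFamily k τ (a, b) ∈ Submodule.span k (Set.range (spanningFamily k τ)) :=
      Submodule.subset_span ⟨(a, b), rfl⟩
    fin_cases n
    · simpa [spanningFamily] using hmem 0
    · simpa [spanningFamily] using hmem 1
    · change mkH2 k τ (of k _ (_ * τ ^ 2)) ∈ _
      rw [mkH2_of_mul_sq]
      refine Submodule.neg_mem _ (Submodule.add_mem _ ?_ ?_)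
      · simpa only [spanningFamily, Fin.val_zero, pow_zero, mul_one] using hmem 0
      · simpa only [spanningFamily, Fin.val_one, pow_one] using hmem 1
  | add x y hx hy => simpa using Submodule.add_mem _ hx hy
  | smul r x hx => simpa using Submodule.smul_mem _ r hx

theorem finite_quotientH2_and_card_le [Finite k] (hτ3 : τ ^ 3 = 1) (hτ : τ ≠ 1) :
    Finite (QuotientH2 k τ) ∧ Nat.card (QuotientH2 k τ) ≤ Nat.card k ^ 4 := by
  have hsurj : Function.Surjective (Fintype.linearCombination k (spanningFamily k τ)) := by
    rw [← LinearMap.range_eq_top, Fintype.range_linearCombination, span_spanningFamily hτ3 hτ]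
  refine ⟨Finite.of_surjective _ hsurj, ?_⟩
  simpa [Nat.card_fun] using Nat.card_le_card_of_surjective _ hsurj

end Spanning

section Representation

def nonzeroVector : Fin 3 → Fin 2 → ZMod 2 := ![![1, 0], ![0, 1], ![1, 1]]

/-- The matrix sending the standard basis `e₀, e₁` to `v (σ 0), v (σ 1)`, where
`v = nonzeroVector` lists the nonzero vectors of `𝔽₂²`; it permutes them as `σ` permutes
`Fin 3`, since `v 2 = v 0 + v 1`. -/
def permToMatrix : Perm (Fin 3) →* Matrix (Fin 2) (Fin 2) (ZMod 2) where
  toFun σ := Matrix.of fun i j => nonzeroVector (σ j.castSucc) i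
  map_one' := by decide
  map_mul' := by decide

theorem permToMatrix_one_add_add_sq : ∀ τ : Perm (Fin 3), τ ^ 3 = 1 → τ ≠ 1 →
    1 + permToMatrix τ + permToMatrix τ ^ 2 = 0 := by
  decide

theorem exists_permToMatrix_add_eq_single : ∀ i j : Fin 2, ∃ g h : Perm (Fin 3),
    permToMatrix g + permToMatrix h = Matrix.single i j 1 := by
  decide

noncomputable def toMatrixₐ :
    MonoidAlgebra (ZMod 2) (Perm (Fin 3)) →ₐ[ZMod 2] Matrix (Fin 2) (Fin 2) (ZMod 2) :=
  MonoidAlgebra.lift _ _ _ permToMatrix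

theorem toMatrixₐ_surjective : Function.Surjective toMatrixₐ := by
  have hsingle (i j : Fin 2) : Matrix.single i j 1 ∈ toMatrixₐ.range := by
    obtain ⟨g, h, hgh⟩ := exists_permToMatrix_add_eq_single i j
    exact ⟨of _ _ g + of _ _ h, by simp [toMatrixₐ, hgh]⟩
  intro M
  rw [Matrix.matrix_eq_sum_single M]
  refine toMatrixₐ.range.sum_mem fun i _ => toMatrixₐ.range.sum_mem fun j _ => ?_
  simpa using toMatrixₐ.range.smul_mem (hsingle i j) (M i j)

theorem ringCon_span_h2_le_ker {τ : Perm (Fin 3)} (hτ3 : τ ^ 3 = 1) (hτ : τ ≠ 1) :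
    (TwoSidedIdeal.span {h2 (ZMod 2) τ}).ringCon ≤ RingCon.ker toMatrixₐ.toRingHom := by
  refine TwoSidedIdeal.ringCon_le_iff.mp (TwoSidedIdeal.span_le.mpr ?_)
  rintro _ rfl
  refine (TwoSidedIdeal.mem_ker _).mpr ?_
  simpa [h2, toMatrixₐ] using permToMatrix_one_add_add_sq τ hτ3 hτ

end Representation

end GroupAlgebraS3

open GroupAlgebraS3

/-- For a 3-cycle `τ ∈ S₃`, the quotient of `𝔽₂[S₃]` by the two-sided ideal generated by
`H₂ = ι + τ + τ²` is isomorphic as a ring to `M₂(𝔽₂)`. -/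
theorem quotient_by_H2_iso_matrix
    (τ : Equiv.Perm (Fin 3)) (hτ : τ.IsThreeCycle) :
    Nonempty
      (((TwoSidedIdeal.span
          {(1 : MonoidAlgebra (ZMod 2) (Equiv.Perm (Fin 3)))
            + MonoidAlgebra.of (ZMod 2) (Equiv.Perm (Fin 3)) τ
            + MonoidAlgebra.of (ZMod 2) (Equiv.Perm (Fin 3)) (τ ^ 2)}).ringCon.Quotient)
        ≃+* Matrix (Fin 2) (Fin 2) (ZMod 2)) := by
  have hτ3 : τ ^ 3 = 1 := orderOf_dvd_iff_pow_eq_one.mp hτ.orderOf.dvd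
  obtain ⟨_, hcard⟩ := finite_quotientH2_and_card_le (k := ZMod 2) hτ3 hτ.ne_one
  have hbij := (RingCon.lift_surjective_of_surjective (ringCon_span_h2_le_ker hτ3 hτ.ne_one)
    toMatrixₐ_surjective).bijective_of_nat_card_le (hcard.trans_eq (by simp [Matrix]))
  exact ⟨RingEquiv.ofBijective _ hbij⟩
end
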